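/- (Basic error estimate / quasi-optimality.) Let (u,p) be the unique solution of the mixed Volterra problem and (u_h,p_h) the unique solution of the semi-discrete problem. Then there exists a constant C > 0 depending only on ‖a‖, ‖b‖, α₀*, β*, T and the kernel bounds C_{k₁}, C_{k₂}, C_{k₃}, C_{k̃} — in particular independent of the choice of subspaces 𝒱_h, 𝒬_h — such that ‖u − u_h‖_{L¹(J;𝒱)} + ‖p − p_h‖_{L¹(J;𝒬)} ≤ C ( inf_{v ∈ L¹(J;𝒱_h)} ‖u − v‖_{L¹(J;𝒱)} + inf_{q ∈ L¹(J;𝒬_h)} ‖p − q‖_{L¹(J;𝒬)} ). -/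

import Mathlib

/-
Subtracting the two problems, the errors `e = u - uₕ`, `η = p - pₕ` satisfy the Volterra equations
tested on `𝒱ₕ × 𝒬ₕ` with zero data. The second one is a homogeneous Volterra equation for the
restriction of `b (e t)` to `𝒬ₕ`, so Grönwall's lemma makes `e` discretely divergence free. At a
fixed time the first one is then a discrete saddle point problem perturbed by the memory term,
which is bounded by `∫₀ᵗ (‖e‖ + ‖η‖)`. Brezzi's argument (coercivity on the discrete kernel, and a
right inverse of the discrete divergence bounded by the inf-sup constant) bounds `‖e t‖ + ‖η t‖`
by the interpolation errors at `t` plus this memory term, and an `L¹` Grönwall inequality in `t`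
concludes.
-/

open MeasureTheory Real Set
open scoped ENNReal

noncomputable section

variable {V Q : Type*}
  [NormedAddCommGroup V] [InnerProductSpace ℝ V] [CompleteSpace V]
  [NormedAddCommGroup Q] [InnerProductSpace ℝ Q] [CompleteSpace Q]

/-- `(u, p)` is a solution of the mixed Volterra problem on `J = [0, T]`:
for a.e. `t ∈ J` and all `(v, q) ∈ 𝒱 × 𝒬`,
`a(u(t),v) + b(v,p(t)) = ⟨f(t),v⟩ + ∫₀ᵗ [k₁(t,s)a(u(s),v) + k₂(t,s)b(v,p(s))] ds` and
`b(u(t),q) = ⟨g(t),q⟩ + ∫₀ᵗ k₃(t,s)b(u(s),q) ds`. -/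
def MixedVolterraSol (T : ℝ)
    (a : V →L[ℝ] V →L[ℝ] ℝ) (b : V →L[ℝ] Q →L[ℝ] ℝ)
    (k₁ k₂ k₃ : ℝ → ℝ → ℝ)
    (f : ℝ → V →L[ℝ] ℝ) (g : ℝ → Q →L[ℝ] ℝ)
    (u : ℝ → V) (p : ℝ → Q) : Prop :=
  ∀ᵐ t ∂(volume.restrict (Icc (0:ℝ) T)),
    (∀ v : V, a (u t) v + b v (p t)
        = f t v + ∫ s in (0:ℝ)..t, (k₁ t s * a (u s) v + k₂ t s * b v (p s))) ∧
    ∀ q : Q, b (u t) q = g t q + ∫ s in (0:ℝ)..t, k₃ t s * b (u s) q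

/-- `(u, p)` is a solution of the semi-discrete mixed Volterra problem on `J = [0, T]`
associated with the finite element subspaces `Vh ⊆ 𝒱` and `Qh ⊆ 𝒬`. -/
def SemiDiscreteSol (T : ℝ)
    (a : V →L[ℝ] V →L[ℝ] ℝ) (b : V →L[ℝ] Q →L[ℝ] ℝ)
    (k₁ k₂ k₃ : ℝ → ℝ → ℝ)
    (f : ℝ → V →L[ℝ] ℝ) (g : ℝ → Q →L[ℝ] ℝ)
    (Vh : Submodule ℝ V) (Qh : Submodule ℝ Q)
    (u : ℝ → V) (p : ℝ → Q) : Prop :=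
  (∀ t, u t ∈ Vh) ∧ (∀ t, p t ∈ Qh) ∧
  ∀ᵐ t ∂(volume.restrict (Icc (0:ℝ) T)),
    (∀ v ∈ Vh, a (u t) v + b v (p t)
        = f t v + ∫ s in (0:ℝ)..t, (k₁ t s * a (u s) v + k₂ t s * b v (p s))) ∧
    ∀ q ∈ Qh, b (u t) q = g t q + ∫ s in (0:ℝ)..t, k₃ t s * b (u s) q

open scoped RealInnerProductSpace

theorem mul_le_of_mul_sq_le {c r R : ℝ} (hr : 0 ≤ r) (hR : 0 ≤ R) (h : c * r ^ 2 ≤ R * r) :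
    c * r ≤ R := by
  rcases hr.eq_or_lt with rfl | hr
  · simpa using hR
  · exact le_of_mul_le_mul_right (by linarith) hr

theorem le_mul_exp_of_le_add_mul_integral {H : ℝ → ℝ} (hH : Continuous H) {c K T : ℝ}
    (hK : 0 ≤ K) (hT : 0 ≤ T) (hle : ∀ t ∈ Icc 0 T, H t ≤ c + K * ∫ s in 0..t, H s) :
    H T ≤ c * exp (K * T) := by
  set G : ℝ → ℝ := fun t => ∫ s in 0..t, H s
  have hG : ∀ t, HasDerivAt G (H t) t := fun t => (hH.integral_hasStrictDerivAt 0 t).hasDerivAt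
  have hGT : G T ≤ gronwallBound 0 K c T := by
    simpa using le_gronwallBound_of_liminf_deriv_right_le
      (continuous_iff_continuousAt.2 fun t => (hG t).continuousAt).continuousOn
      (fun t _ r hr => (hG t).hasDerivWithinAt.liminf_right_slope_le hr) (by simp [G])
      (fun t ht => (hle t (Ico_subset_Icc_self ht)).trans_eq (add_comm _ _)) T ⟨hT, le_rfl⟩
  have hKG : K * gronwallBound 0 K c T = c * (exp (K * T) - 1) := by
    rcases hK.eq_or_lt with rfl | hKpos
    · simp
    · rw [gronwallBound_of_K_ne_0 hKpos.ne']
      field_simp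
      ring
  calc H T ≤ c + K * G T := hle T ⟨hT, le_rfl⟩
    _ ≤ c + K * gronwallBound 0 K c T := by gcongr
    _ = c * exp (K * T) := by rw [hKG]; ring

theorem MeasureTheory.IntegrableOn.intervalIntegrable_of_mem_Icc {E : Type*}
    [NormedAddCommGroup E] {f : ℝ → E} {a b t : ℝ} (hf : IntegrableOn f (Icc a b))
    (ht : t ∈ Icc a b) : IntervalIntegrable f volume a t :=
  (hf.mono_set (uIcc_of_le ht.1 ▸ Icc_subset_Icc_right ht.2)).intervalIntegrable

theorem setIntegral_Icc_le_exp_mul_of_ae_le_add_mul_integral {h A : ℝ → ℝ} {K T : ℝ}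
    (hK : 0 ≤ K) (hT : 0 ≤ T) (hh : IntegrableOn h (Icc 0 T)) (hA : IntegrableOn A (Icc 0 T))
    (hA0 : ∀ t, 0 ≤ A t)
    (hle : ∀ᵐ t ∂volume.restrict (Icc 0 T), h t ≤ A t + K * ∫ s in 0..t, h s) :
    ∫ t in Icc 0 T, h t ≤ exp (K * T) * ∫ t in Icc 0 T, A t := by
  -- extended by zero, `h` has a primitive that is continuous on all of `ℝ`
  have hh₀ := hh.integrable_indicator measurableSet_Icc
  set H : ℝ → ℝ := fun t => ∫ s in 0..t, (Icc 0 T).indicator h s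
  have hH : Continuous H := intervalIntegral.continuous_primitive
    (fun _ _ => hh₀.intervalIntegrable) 0
  have hHh : ∀ t ∈ Icc (0 : ℝ) T, H t = ∫ s in 0..t, h s := fun t ht =>
    intervalIntegral.integral_congr fun s hs => by
      rw [uIcc_of_le ht.1] at hs
      exact indicator_of_mem (show s ∈ Icc 0 T from ⟨hs.1, hs.2.trans ht.2⟩) h
  have hH_le : ∀ t ∈ Icc (0 : ℝ) T, H t ≤ (∫ s in Icc 0 T, A s) + K * ∫ s in 0..t, H s := by
    intro t ht
    have hsub : Icc 0 t ⊆ Icc (0 : ℝ) T := Icc_subset_Icc_right ht.2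
    have hAt := hA.intervalIntegrable_of_mem_Icc ht
    have hHt : IntervalIntegrable H volume 0 t := hH.intervalIntegrable 0 t
    calc H t ≤ ∫ s in 0..t, (A s + K * H s) := by
          refine intervalIntegral.integral_mono_ae_restrict ht.1 hh₀.intervalIntegrable
            (hAt.add (hHt.const_mul K)) ?_
          filter_upwards [ae_restrict_of_ae_restrict_of_subset hsub hle,
            ae_restrict_mem measurableSet_Icc] with s hs hs_mem
          rwa [← hHh s (hsub hs_mem), ← indicator_of_mem (hsub hs_mem) h] at hs
      _ = (∫ s in 0..t, A s) + K * ∫ s in 0..t, H s := by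
          rw [intervalIntegral.integral_add hAt (hHt.const_mul K),
            intervalIntegral.integral_const_mul]
      _ ≤ _ := by
          gcongr
          rw [intervalIntegral.integral_of_le ht.1]
          exact setIntegral_mono_set hA (.of_forall hA0)
            (Ioc_subset_Icc_self.trans hsub).eventuallyLE
  calc ∫ t in Icc 0 T, h t = H T := by
        rw [hHh T ⟨hT, le_rfl⟩, intervalIntegral.integral_of_le hT, integral_Icc_eq_integral_Ioc]
    _ ≤ (∫ s in Icc 0 T, A s) * exp (K * T) := le_mul_exp_of_le_add_mul_integral hH hK hT hH_le
    _ = _ := mul_comm _ _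

section Volterra

variable {E F : Type*} [NormedAddCommGroup E] [NormedSpace ℝ E]
  [NormedAddCommGroup F] [NormedSpace ℝ F] {T : ℝ}

theorem ae_eq_zero_of_eq_intervalIntegral_smul {C : ℝ} (hT : 0 ≤ T) (hC : 0 ≤ C)
    {k : ℝ → ℝ → ℝ} (hk : ∀ t s : ℝ, 0 ≤ s → s ≤ t → t ≤ T → |k t s| ≤ C)
    {ζ : ℝ → E} (hζ : IntegrableOn ζ (Icc 0 T))
    (heq : ∀ᵐ t ∂volume.restrict (Icc 0 T), ζ t = ∫ s in 0..t, k t s • ζ s) :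
    ∀ᵐ t ∂volume.restrict (Icc 0 T), ζ t = 0 := by
  have hle : ∀ᵐ t ∂volume.restrict (Icc 0 T), ‖ζ t‖ ≤ 0 + C * ∫ s in 0..t, ‖ζ s‖ := by
    filter_upwards [heq, ae_restrict_mem measurableSet_Icc] with t ht_eq ht
    rw [ht_eq, zero_add, ← intervalIntegral.integral_const_mul]
    refine intervalIntegral.norm_integral_le_of_norm_le ht.1 (.of_forall fun s hs => ?_)
      (IntegrableOn.intervalIntegrable_of_mem_Icc (hζ.norm.const_mul C) ht)
    rw [norm_smul, Real.norm_eq_abs]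
    exact mul_le_mul_of_nonneg_right (hk t s hs.1.le hs.2 ht.2) (norm_nonneg _)
  have hint := setIntegral_Icc_le_exp_mul_of_ae_le_add_mul_integral hC hT hζ.norm
    (integrableOn_const measure_Icc_lt_top.ne) (fun _ => le_rfl) hle
  have hzero : ∫ t in Icc 0 T, ‖ζ t‖ = 0 :=
    le_antisymm (by simpa using hint)
      (setIntegral_nonneg measurableSet_Icc fun _ _ => norm_nonneg _)
  filter_upwards [(integral_eq_zero_iff_of_nonneg (fun _ => norm_nonneg _) hζ.norm).1 hzero]
    with t ht
  simpa using ht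

theorem intervalIntegrable_kernel_smul {k : ℝ → ℝ → ℝ}
    (hk : ContinuousOn (fun ts : ℝ × ℝ => k ts.1 ts.2)
      {ts : ℝ × ℝ | 0 ≤ ts.2 ∧ ts.2 ≤ ts.1 ∧ ts.1 ≤ T})
    {ζ : ℝ → E} (hζ : IntegrableOn ζ (Icc 0 T)) {t : ℝ} (ht : t ∈ Icc 0 T) :
    IntervalIntegrable (fun s => k t s • ζ s) volume 0 t :=
  (hζ.intervalIntegrable_of_mem_Icc ht).continuousOn_smul <| by
    rw [uIcc_of_le ht.1]
    exact hk.comp (continuous_const.prodMk continuous_id).continuousOn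
      fun s (hs : s ∈ Icc 0 t) => ⟨hs.1, hs.2, ht.2⟩

theorem intervalIntegrable_kernel_mul {k : ℝ → ℝ → ℝ}
    (hk : ContinuousOn (fun ts : ℝ × ℝ => k ts.1 ts.2)
      {ts : ℝ × ℝ | 0 ≤ ts.2 ∧ ts.2 ≤ ts.1 ∧ ts.1 ≤ T})
    {r : ℝ → ℝ} (hr : IntegrableOn r (Icc 0 T)) {t : ℝ} (ht : t ∈ Icc 0 T) :
    IntervalIntegrable (fun s => k t s * r s) volume 0 t :=
  intervalIntegrable_kernel_smul hk hr ht

theorem ae_forall_mem_eq_zero_of_eq_intervalIntegral (b : E →L[ℝ] F →L[ℝ] ℝ)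
    (Qh : Submodule ℝ F) {C : ℝ} (hT : 0 ≤ T) (hC : 0 ≤ C) {k : ℝ → ℝ → ℝ}
    (hkc : ContinuousOn (fun ts : ℝ × ℝ => k ts.1 ts.2)
      {ts : ℝ × ℝ | 0 ≤ ts.2 ∧ ts.2 ≤ ts.1 ∧ ts.1 ≤ T})
    (hk : ∀ t s : ℝ, 0 ≤ s → s ≤ t → t ≤ T → |k t s| ≤ C)
    {e : ℝ → E} (he : IntegrableOn e (Icc 0 T))
    (heq : ∀ᵐ t ∂volume.restrict (Icc 0 T),
      ∀ q ∈ Qh, b (e t) q = ∫ s in 0..t, k t s * b (e s) q) :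
    ∀ᵐ t ∂volume.restrict (Icc 0 T), ∀ q ∈ Qh, b (e t) q = 0 := by
  -- the restrictions `b (e t)|_Qh` solve a homogeneous Volterra equation in the dual of `Qh`
  set Bh := b.bilinearComp (.id ℝ E) Qh.subtypeL
  have hζ := Bh.integrable_comp he
  have hvanish := ae_eq_zero_of_eq_intervalIntegral_smul hT hC hk hζ <| by
    filter_upwards [heq, ae_restrict_mem measurableSet_Icc] with t ht_eq ht
    ext q
    rw [ContinuousLinearMap.intervalIntegral_apply (intervalIntegrable_kernel_smul hkc hζ ht)]
    simpa [Bh] using ht_eq q q.2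
  filter_upwards [hvanish] with t ht q hq
  simpa [Bh] using congrArg (fun φ => φ ⟨q, hq⟩) ht

theorem abs_intervalIntegral_kernel_le {a : E →L[ℝ] E →L[ℝ] ℝ} {b : E →L[ℝ] F →L[ℝ] ℝ}
    {κ₁ κ₂ : ℝ → ℝ} {C₁ C₂ t : ℝ} (ht : 0 ≤ t) (hC₁ : 0 ≤ C₁) (hC₂ : 0 ≤ C₂)
    (hκ₁ : ∀ s ∈ Ioc 0 t, |κ₁ s| ≤ C₁) (hκ₂ : ∀ s ∈ Ioc 0 t, |κ₂ s| ≤ C₂)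
    {e : ℝ → E} {η : ℝ → F} (hint : IntervalIntegrable (fun s => ‖e s‖ + ‖η s‖) volume 0 t)
    (v : E) :
    |∫ s in 0..t, (κ₁ s * a (e s) v + κ₂ s * b v (η s))|
      ≤ (C₁ * ‖a‖ + C₂ * ‖b‖) * (∫ s in 0..t, (‖e s‖ + ‖η s‖)) * ‖v‖ := by
  rw [← Real.norm_eq_abs, mul_right_comm, ← intervalIntegral.integral_const_mul]
  refine intervalIntegral.norm_integral_le_of_norm_le ht (.of_forall fun s hs => ?_)
    (hint.const_mul _)
  have ha : ‖a (e s) v‖ ≤ ‖a‖ * ‖e s‖ * ‖v‖ := a.le_opNorm₂ _ _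
  have hb : ‖b v (η s)‖ ≤ ‖b‖ * ‖v‖ * ‖η s‖ := b.le_opNorm₂ _ _
  have h₁ : ‖κ₁ s‖ ≤ C₁ := hκ₁ s hs
  have h₂ : ‖κ₂ s‖ ≤ C₂ := hκ₂ s hs
  calc ‖κ₁ s * a (e s) v + κ₂ s * b v (η s)‖
      ≤ ‖κ₁ s‖ * ‖a (e s) v‖ + ‖κ₂ s‖ * ‖b v (η s)‖ := by
        rw [← norm_mul, ← norm_mul]
        exact norm_add_le _ _
    _ ≤ C₁ * (‖a‖ * ‖e s‖ * ‖v‖) + C₂ * (‖b‖ * ‖v‖ * ‖η s‖) := by gcongr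
    _ ≤ (C₁ * ‖a‖ + C₂ * ‖b‖) * ‖v‖ * (‖e s‖ + ‖η s‖) := by
        have h₁ : 0 ≤ C₁ * ‖a‖ * ‖v‖ := by positivity
        have h₂ : 0 ≤ C₂ * ‖b‖ * ‖v‖ := by positivity
        nlinarith [mul_nonneg h₁ (norm_nonneg (η s)), mul_nonneg h₂ (norm_nonneg (e s))]

end Volterra

section SaddlePoint

variable {E F : Type*} [NormedAddCommGroup E] [NormedAddCommGroup F]

theorem mul_norm_le_of_infSup [NormedSpace ℝ E] [NormedSpace ℝ F]
    {b : E →L[ℝ] F →L[ℝ] ℝ} {Vh : Submodule ℝ E} {Qh : Submodule ℝ F} {β : ℝ}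
    (hinf : ∀ q ∈ Qh, q ≠ 0 → β ≤ ⨆ v : Vh, b (v : E) q / (‖(v : E)‖ * ‖q‖))
    {q : F} (hq : q ∈ Qh) {M : ℝ} (hM : 0 ≤ M) (hbM : ∀ v ∈ Vh, b v q ≤ M * ‖v‖) :
    β * ‖q‖ ≤ M := by
  rcases eq_or_ne q 0 with rfl | hq0
  · simpa using hM
  have hqpos : 0 < ‖q‖ := norm_pos_iff.2 hq0
  rw [← le_div_iff₀ hqpos]
  refine (hinf q hq hq0).trans (ciSup_le fun v => ?_)
  calc b v q / (‖(v : E)‖ * ‖q‖) ≤ M * ‖(v : E)‖ / (‖(v : E)‖ * ‖q‖) := by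
        gcongr
        exact hbM v v.2
    _ = M / ‖q‖ * (‖(v : E)‖ / ‖(v : E)‖) := by ring
    _ ≤ M / ‖q‖ := mul_le_of_le_one_right (by positivity) (div_self_le_one _)

theorem exists_mem_forall_b_eq_of_infSup [InnerProductSpace ℝ E] [InnerProductSpace ℝ F]
    {b : E →L[ℝ] F →L[ℝ] ℝ} {Vh : Submodule ℝ E} {Qh : Submodule ℝ F}
    [CompleteSpace Vh] [FiniteDimensional ℝ Qh] {β : ℝ} (hβ : 0 < β)
    (hinf : ∀ q ∈ Qh, q ≠ 0 → β ≤ ⨆ v : Vh, b (v : E) q / (‖(v : E)‖ * ‖q‖)) (x : E) :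
    ∃ z ∈ Vh, (∀ q ∈ Qh, b z q = b x q) ∧ β * ‖z‖ ≤ ‖b‖ * ‖x‖ := by
  let R : (Qh →L[ℝ] ℝ) →L[ℝ] Qh :=
    (InnerProductSpace.toDual ℝ Qh).symm.toContinuousLinearEquiv.toContinuousLinearMap
  have hR (φ : Qh →L[ℝ] ℝ) (q : Qh) : ⟪R φ, q⟫ = φ q := InnerProductSpace.toDual_symm_apply
  -- `Th` is the discrete operator `Vh → Qh` induced by `b`; by inf-sup its adjoint is bounded
  -- below by `β`, and `z` is the solution `Th' y` of `Th z = (b x)|_Qh` in the range of `Th'`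
  let Th : Vh →L[ℝ] Qh := R ∘L b.bilinearComp Vh.subtypeL Qh.subtypeL
  have hTh (v : Vh) (q : Qh) : ⟪Th v, q⟫ = b v q := hR _ q
  set Th' := ContinuousLinearMap.adjoint Th
  have hTh' (y : Qh) : β * ‖y‖ ≤ ‖Th' y‖ :=
    mul_norm_le_of_infSup hinf y.2 (norm_nonneg _) fun v hv => by
      calc b v y = ⟪(⟨v, hv⟩ : Vh), Th' y⟫ := by
            rw [ContinuousLinearMap.adjoint_inner_right, hTh]
        _ ≤ ‖Th' y‖ * ‖v‖ := by rw [mul_comm]; exact real_inner_le_norm _ _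
  have hsq (y : Qh) : ‖Th' y‖ ^ 2 = ⟪Th (Th' y), y⟫ := by
    rw [← ContinuousLinearMap.adjoint_inner_right, real_inner_self_eq_norm_sq]
  have hinj : Function.Injective (Th ∘L Th' : Qh →ₗ[ℝ] Qh) := by
    refine (injective_iff_map_eq_zero _).2 fun y hy => norm_eq_zero.1 ?_
    have h0 : ‖Th' y‖ ^ 2 = 0 := by
      rw [hsq, show Th (Th' y) = 0 from hy, inner_zero_left]
    have := hTh' y
    rw [pow_eq_zero_iff two_ne_zero |>.1 h0] at this
    exact le_antisymm (nonpos_of_mul_nonpos_right this hβ) (norm_nonneg y)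
  obtain ⟨y, hy⟩ := LinearMap.injective_iff_surjective.1 hinj (R (b x ∘L Qh.subtypeL))
  have hy' : Th (Th' y) = R (b x ∘L Qh.subtypeL) := hy
  refine ⟨Th' y, (Th' y).2, fun q hq => ?_, ?_⟩
  · calc b (Th' y) q = ⟪Th (Th' y), ⟨q, hq⟩⟫ := (hTh (Th' y) ⟨q, hq⟩).symm
      _ = b x q := by rw [hy', hR]; rfl
  · have hz_sq : ‖Th' y‖ ^ 2 ≤ ‖b‖ * ‖x‖ * ‖y‖ := by
      rw [hsq, hy', hR]
      exact (Real.le_norm_self _).trans (b.le_opNorm₂ x y)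
    refine mul_le_of_mul_sq_le (norm_nonneg _) (by positivity) ?_
    calc β * ‖Th' y‖ ^ 2 ≤ ‖b‖ * ‖x‖ * (β * ‖y‖) := by nlinarith
      _ ≤ ‖b‖ * ‖x‖ * ‖Th' y‖ := by gcongr; exact hTh' y

theorem mul_norm_le_of_coercive_of_mem_ker [NormedSpace ℝ E] [NormedSpace ℝ F]
    {a : E →L[ℝ] E →L[ℝ] ℝ} {b : E →L[ℝ] F →L[ℝ] ℝ} {Vh : Submodule ℝ E} {Qh : Submodule ℝ F}
    {α : ℝ} (hcoer : ∀ v ∈ Vh, (∀ q ∈ Qh, b v q = 0) → α * ‖v‖ ^ 2 ≤ a v v)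
    {x xh w : E} {y yh yI : F} (hw : w ∈ Vh) (hw_ker : ∀ q ∈ Qh, b w q = 0)
    (hyh : yh ∈ Qh) (hyI : yI ∈ Qh) {M : ℝ} (hM : 0 ≤ M)
    (hres : ∀ v ∈ Vh, a (x - xh) v + b v (y - yh) ≤ M * ‖v‖) :
    α * ‖w‖ ≤ M + ‖a‖ * ‖x - xh - w‖ + ‖b‖ * ‖y - yI‖ := by
  have hbw : b w (y - yh) = b w (y - yI) := by
    rw [← sub_add_sub_cancel y yI yh, map_add, hw_ker _ (sub_mem hyI hyh), add_zero]
  have haw : a w w = (a (x - xh) w + b w (y - yh)) - a (x - xh - w) w - b w (y - yI) := by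
    rw [hbw]
    simp only [map_sub, sub_apply]
    ring
  have h₁ : -a (x - xh - w) w ≤ ‖a‖ * ‖x - xh - w‖ * ‖w‖ :=
    (neg_le_abs _).trans (a.le_opNorm₂ _ _)
  have h₂ : -b w (y - yI) ≤ ‖b‖ * ‖w‖ * ‖y - yI‖ := (neg_le_abs _).trans (b.le_opNorm₂ _ _)
  refine mul_le_of_mul_sq_le (norm_nonneg _) (by positivity) ?_
  calc α * ‖w‖ ^ 2 ≤ a w w := hcoer w hw hw_ker
    _ ≤ _ := by rw [haw]; linarith [hres w hw]

theorem norm_sub_le_of_coercive_of_infSup [InnerProductSpace ℝ E] [InnerProductSpace ℝ F]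
    {a : E →L[ℝ] E →L[ℝ] ℝ} {b : E →L[ℝ] F →L[ℝ] ℝ} {Vh : Submodule ℝ E} {Qh : Submodule ℝ F}
    [CompleteSpace Vh] [FiniteDimensional ℝ Qh] {α β : ℝ} (hα : 0 < α) (hβ : 0 < β)
    (hcoer : ∀ v ∈ Vh, (∀ q ∈ Qh, b v q = 0) → α * ‖v‖ ^ 2 ≤ a v v)
    (hinf : ∀ q ∈ Qh, q ≠ 0 → β ≤ ⨆ v : Vh, b (v : E) q / (‖(v : E)‖ * ‖q‖))
    {x xh xI : E} {y yh yI : F} (hxh : xh ∈ Vh) (hxI : xI ∈ Vh) (hyh : yh ∈ Qh) (hyI : yI ∈ Qh)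
    {M : ℝ} (hM : 0 ≤ M) (hdiv : ∀ q ∈ Qh, b (x - xh) q = 0)
    (hres : ∀ v ∈ Vh, a (x - xh) v + b v (y - yh) ≤ M * ‖v‖) :
    ‖x - xh‖ ≤ (1 + (1 + ‖a‖ + ‖b‖) / α) * (1 + ‖b‖ / β) * (‖x - xI‖ + ‖y - yI‖ + M) := by
  -- correct the interpolation error `xI - xh` into the discrete kernel
  obtain ⟨z, hz, hbz, hz_le⟩ := exists_mem_forall_b_eq_of_infSup hβ hinf (x - xI)
  set w := xI - xh + z with hw_def
  have hw_ker : ∀ q ∈ Qh, b w q = 0 := fun q hq => by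
    rw [show w = (x - xh) - (x - xI) + z by rw [hw_def]; abel, map_add, map_sub, add_apply,
      sub_apply, hdiv q hq, hbz q hq]
    ring
  have hw_le := mul_norm_le_of_coercive_of_mem_ker hcoer (add_mem (sub_mem hxI hxh) hz) hw_ker
    hyh hyI hM hres
  rw [show x - xh - w = x - xI - z by rw [hw_def]; abel] at hw_le
  set A := ‖a‖
  set B := ‖b‖
  set X := ‖x - xI‖ + ‖y - yI‖ + M
  have hρ : ‖x - xI‖ ≤ X := by linarith [norm_nonneg (y - yI)]
  have hψ : ‖y - yI‖ ≤ X := by linarith [norm_nonneg (x - xI)]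
  have hM' : M ≤ X := by linarith [norm_nonneg (x - xI), norm_nonneg (y - yI)]
  have hz' : ‖z‖ ≤ B / β * X := by
    rw [div_mul_eq_mul_div, le_div_iff₀ hβ, mul_comm]
    exact hz_le.trans (by gcongr)
  have hw' : α * ‖w‖ ≤ (1 + A + B) * ((1 + B / β) * X) :=
    calc α * ‖w‖ ≤ M + A * (‖x - xI‖ + ‖z‖) + B * ‖y - yI‖ := by
          grw [hw_le, norm_sub_le]
      _ ≤ X + A * (X + B / β * X) + B * X := by gcongr
      _ ≤ (1 + A + B) * X + (1 + A + B) * (B / β * X) := by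
          have : 0 ≤ B / β * X := by positivity
          nlinarith [mul_nonneg (add_nonneg zero_le_one (norm_nonneg b)) this]
      _ = (1 + A + B) * ((1 + B / β) * X) := by ring
  calc ‖x - xh‖ ≤ ‖x - xI‖ + ‖w‖ + ‖z‖ := by
        rw [show x - xh = (x - xI) + w - z by rw [hw_def]; abel]
        exact (norm_sub_le _ _).trans (by gcongr; exact norm_add_le _ _)
    _ ≤ X + (1 + A + B) / α * ((1 + B / β) * X) + B / β * X := by
        gcongr
        rwa [div_mul_eq_mul_div, le_div_iff₀ hα, mul_comm]
    _ = (1 + (1 + A + B) / α) * (1 + B / β) * X := by ring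

theorem mul_norm_sub_le_of_infSup [NormedSpace ℝ E] [NormedSpace ℝ F]
    {a : E →L[ℝ] E →L[ℝ] ℝ} {b : E →L[ℝ] F →L[ℝ] ℝ} {Vh : Submodule ℝ E} {Qh : Submodule ℝ F}
    {β : ℝ} (hinf : ∀ q ∈ Qh, q ≠ 0 → β ≤ ⨆ v : Vh, b (v : E) q / (‖(v : E)‖ * ‖q‖))
    {x xh : E} {y yh yI : F} (hyh : yh ∈ Qh) (hyI : yI ∈ Qh) {M : ℝ} (hM : 0 ≤ M)
    (hres : ∀ v ∈ Vh, a (x - xh) v + b v (y - yh) ≤ M * ‖v‖) :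
    β * ‖yI - yh‖ ≤ M + ‖a‖ * ‖x - xh‖ + ‖b‖ * ‖y - yI‖ := by
  refine mul_norm_le_of_infSup hinf (sub_mem hyI hyh) (by positivity) fun v hv => ?_
  have h₁ : -a (x - xh) v ≤ ‖a‖ * ‖x - xh‖ * ‖v‖ := (neg_le_abs _).trans (a.le_opNorm₂ _ _)
  have h₂ : -b v (y - yI) ≤ ‖b‖ * ‖v‖ * ‖y - yI‖ := (neg_le_abs _).trans (b.le_opNorm₂ _ _)
  calc b v (yI - yh) = (a (x - xh) v + b v (y - yh)) - a (x - xh) v - b v (y - yI) := by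
        rw [← sub_sub_sub_cancel_left yh yI y, map_sub]
        ring
    _ ≤ _ := by linarith [hres v hv]

def saddlePointConst (A B α β : ℝ) : ℝ :=
  (1 + (1 + A + B) / α) * (1 + B / β) * (2 + (1 + A + B) / β)

theorem saddlePointConst_pos {A B α β : ℝ} (hA : 0 ≤ A) (hB : 0 ≤ B) (hα : 0 < α) (hβ : 0 < β) :
    0 < saddlePointConst A B α β := by
  unfold saddlePointConst
  positivity

theorem norm_sub_add_norm_sub_le_saddlePointConst [InnerProductSpace ℝ E] [InnerProductSpace ℝ F]
    {a : E →L[ℝ] E →L[ℝ] ℝ} {b : E →L[ℝ] F →L[ℝ] ℝ} {Vh : Submodule ℝ E} {Qh : Submodule ℝ F}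
    [CompleteSpace Vh] [FiniteDimensional ℝ Qh] {α β : ℝ} (hα : 0 < α) (hβ : 0 < β)
    (hcoer : ∀ v ∈ Vh, (∀ q ∈ Qh, b v q = 0) → α * ‖v‖ ^ 2 ≤ a v v)
    (hinf : ∀ q ∈ Qh, q ≠ 0 → β ≤ ⨆ v : Vh, b (v : E) q / (‖(v : E)‖ * ‖q‖))
    {x xh xI : E} {y yh yI : F} (hxh : xh ∈ Vh) (hxI : xI ∈ Vh) (hyh : yh ∈ Qh) (hyI : yI ∈ Qh)
    {M : ℝ} (hM : 0 ≤ M) (hdiv : ∀ q ∈ Qh, b (x - xh) q = 0)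
    (hres : ∀ v ∈ Vh, a (x - xh) v + b v (y - yh) ≤ M * ‖v‖) :
    ‖x - xh‖ + ‖y - yh‖
      ≤ saddlePointConst ‖a‖ ‖b‖ α β * (‖x - xI‖ + ‖y - yI‖ + M) := by
  have hu := norm_sub_le_of_coercive_of_infSup hα hβ hcoer hinf hxh hxI hyh hyI hM hdiv hres
  have hp := mul_norm_sub_le_of_infSup hinf (x := x) hyh hyI hM hres
  set A := ‖a‖
  set B := ‖b‖
  set X := ‖x - xI‖ + ‖y - yI‖ + M
  set cu := (1 + (1 + A + B) / α) * (1 + B / β)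
  have hcu : 1 ≤ cu := one_le_mul_of_one_le_of_one_le
    (le_add_of_nonneg_right (by positivity)) (le_add_of_nonneg_right (by positivity))
  have hX : ‖y - yI‖ ≤ X := by linarith [norm_nonneg (x - xI)]
  have hX0 : 0 ≤ X := by positivity
  have hp' : ‖yI - yh‖ ≤ (1 + A + B) / β * (cu * X) := by
    rw [div_mul_eq_mul_div, le_div_iff₀ hβ, mul_comm]
    calc β * ‖yI - yh‖ ≤ M + A * ‖x - xh‖ + B * ‖y - yI‖ := hp
      _ ≤ cu * X + A * (cu * X) + B * (cu * X) := by
          gcongr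
          · linarith [norm_nonneg (x - xI), norm_nonneg (y - yI), le_mul_of_one_le_left hX0 hcu]
          · exact hX.trans (le_mul_of_one_le_left hX0 hcu)
      _ = (1 + A + B) * (cu * X) := by ring
  calc ‖x - xh‖ + ‖y - yh‖ ≤ cu * X + (‖y - yI‖ + ‖yI - yh‖) := by
        gcongr
        exact norm_sub_le_norm_sub_add_norm_sub _ _ _
    _ ≤ cu * X + (cu * X + (1 + A + B) / β * (cu * X)) := by
        gcongr
        exact hX.trans (le_mul_of_one_le_left hX0 hcu)
    _ = saddlePointConst A B α β * X := by unfold saddlePointConst; ring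

end SaddlePoint

theorem MixedVolterraSol.ae_galerkin_orthogonality {E F : Type*} [NormedAddCommGroup E]
    [InnerProductSpace ℝ E] [NormedAddCommGroup F] [InnerProductSpace ℝ F]
    {T : ℝ} {a : E →L[ℝ] E →L[ℝ] ℝ} {b : E →L[ℝ] F →L[ℝ] ℝ} {k₁ k₂ k₃ : ℝ → ℝ → ℝ}
    (hk₁ : ContinuousOn (fun ts : ℝ × ℝ => k₁ ts.1 ts.2)
      {ts : ℝ × ℝ | 0 ≤ ts.2 ∧ ts.2 ≤ ts.1 ∧ ts.1 ≤ T})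
    (hk₂ : ContinuousOn (fun ts : ℝ × ℝ => k₂ ts.1 ts.2)
      {ts : ℝ × ℝ | 0 ≤ ts.2 ∧ ts.2 ≤ ts.1 ∧ ts.1 ≤ T})
    (hk₃ : ContinuousOn (fun ts : ℝ × ℝ => k₃ ts.1 ts.2)
      {ts : ℝ × ℝ | 0 ≤ ts.2 ∧ ts.2 ≤ ts.1 ∧ ts.1 ≤ T})
    {f : ℝ → E →L[ℝ] ℝ} {g : ℝ → F →L[ℝ] ℝ} {Vh : Submodule ℝ E} {Qh : Submodule ℝ F}
    {u uh : ℝ → E} {p ph : ℝ → F} (hu : IntegrableOn u (Icc 0 T)) (hp : IntegrableOn p (Icc 0 T))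
    (huh : IntegrableOn uh (Icc 0 T)) (hph : IntegrableOn ph (Icc 0 T))
    (hsol : MixedVolterraSol T a b k₁ k₂ k₃ f g u p)
    (hsolh : SemiDiscreteSol T a b k₁ k₂ k₃ f g Vh Qh uh ph) :
    ∀ᵐ t ∂volume.restrict (Icc 0 T),
      (∀ v ∈ Vh, a (u t - uh t) v + b v (p t - ph t)
        = ∫ s in 0..t, (k₁ t s * a (u s - uh s) v + k₂ t s * b v (p s - ph s))) ∧
      ∀ q ∈ Qh, b (u t - uh t) q = ∫ s in 0..t, k₃ t s * b (u s - uh s) q := by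
  have ha (w : ℝ → E) (hw : IntegrableOn w (Icc 0 T) volume) (v : E) :
      IntegrableOn (fun s => a (w s) v) (Icc 0 T) := (a.flip v).integrable_comp hw
  have hb (w : ℝ → E) (hw : IntegrableOn w (Icc 0 T) volume) (q : F) :
      IntegrableOn (fun s => b (w s) q) (Icc 0 T) := (b.flip q).integrable_comp hw
  filter_upwards [hsol, hsolh.2.2, ae_restrict_mem measurableSet_Icc]
    with t ⟨hmom, hdiv⟩ ⟨hmomh, hdivh⟩ ht
  constructor
  · intro v hv
    have hI (w : ℝ → E) (r : ℝ → F) (hw : IntegrableOn w (Icc 0 T) volume)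
        (hr : IntegrableOn r (Icc 0 T) volume) :=
      (intervalIntegrable_kernel_mul hk₁ (ha w hw v) ht).add
        (intervalIntegrable_kernel_mul hk₂ ((b v).integrable_comp hr) ht)
    simp only [map_sub, sub_apply, mul_sub]
    rw [intervalIntegral.integral_congr (g := fun s =>
        (k₁ t s * a (u s) v + k₂ t s * b v (p s)) - (k₁ t s * a (uh s) v + k₂ t s * b v (ph s)))
        fun s _ => by ring,
      intervalIntegral.integral_sub (hI u p hu hp) (hI uh ph huh hph)]
    linarith [hmom v, hmomh v hv]
  · intro q hq
    simp only [map_sub, sub_apply, mul_sub]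
    rw [intervalIntegral.integral_sub (intervalIntegrable_kernel_mul hk₃ (hb u hu q) ht)
      (intervalIntegrable_kernel_mul hk₃ (hb uh huh q) ht)]
    linarith [hdiv q, hdivh q hq]

theorem MixedVolterraSol.ae_norm_sub_add_norm_sub_le {E F : Type*} [NormedAddCommGroup E]
    [InnerProductSpace ℝ E] [NormedAddCommGroup F] [InnerProductSpace ℝ F]
    {T : ℝ} (hT : 0 ≤ T) {a : E →L[ℝ] E →L[ℝ] ℝ} {b : E →L[ℝ] F →L[ℝ] ℝ} {k₁ k₂ k₃ : ℝ → ℝ → ℝ}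
    (hk₁c : ContinuousOn (fun ts : ℝ × ℝ => k₁ ts.1 ts.2)
      {ts : ℝ × ℝ | 0 ≤ ts.2 ∧ ts.2 ≤ ts.1 ∧ ts.1 ≤ T})
    (hk₂c : ContinuousOn (fun ts : ℝ × ℝ => k₂ ts.1 ts.2)
      {ts : ℝ × ℝ | 0 ≤ ts.2 ∧ ts.2 ≤ ts.1 ∧ ts.1 ≤ T})
    (hk₃c : ContinuousOn (fun ts : ℝ × ℝ => k₃ ts.1 ts.2)
      {ts : ℝ × ℝ | 0 ≤ ts.2 ∧ ts.2 ≤ ts.1 ∧ ts.1 ≤ T})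
    {C₁ C₂ C₃ : ℝ} (hC₁ : 0 ≤ C₁) (hC₂ : 0 ≤ C₂) (hC₃ : 0 ≤ C₃)
    (hk₁b : ∀ t s : ℝ, 0 ≤ s → s ≤ t → t ≤ T → |k₁ t s| ≤ C₁)
    (hk₂b : ∀ t s : ℝ, 0 ≤ s → s ≤ t → t ≤ T → |k₂ t s| ≤ C₂)
    (hk₃b : ∀ t s : ℝ, 0 ≤ s → s ≤ t → t ≤ T → |k₃ t s| ≤ C₃)
    {Vh : Submodule ℝ E} {Qh : Submodule ℝ F} [CompleteSpace Vh] [FiniteDimensional ℝ Qh]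
    {α β : ℝ} (hα : 0 < α) (hβ : 0 < β)
    (hcoer : ∀ v ∈ Vh, (∀ q ∈ Qh, b v q = 0) → α * ‖v‖ ^ 2 ≤ a v v)
    (hinf : ∀ q ∈ Qh, q ≠ 0 → β ≤ ⨆ v : Vh, b (v : E) q / (‖(v : E)‖ * ‖q‖))
    {f : ℝ → E →L[ℝ] ℝ} {g : ℝ → F →L[ℝ] ℝ} {u uh uI : ℝ → E} {p ph pI : ℝ → F}
    (hu : IntegrableOn u (Icc 0 T)) (hp : IntegrableOn p (Icc 0 T))
    (huh : IntegrableOn uh (Icc 0 T)) (hph : IntegrableOn ph (Icc 0 T))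
    (hsol : MixedVolterraSol T a b k₁ k₂ k₃ f g u p)
    (hsolh : SemiDiscreteSol T a b k₁ k₂ k₃ f g Vh Qh uh ph)
    (huI : ∀ t, uI t ∈ Vh) (hpI : ∀ t, pI t ∈ Qh) :
    ∀ᵐ t ∂volume.restrict (Icc 0 T),
      ‖u t - uh t‖ + ‖p t - ph t‖
        ≤ saddlePointConst ‖a‖ ‖b‖ α β * (‖u t - uI t‖ + ‖p t - pI t‖)
          + saddlePointConst ‖a‖ ‖b‖ α β * (C₁ * ‖a‖ + C₂ * ‖b‖)
            * ∫ s in 0..t, (‖u s - uh s‖ + ‖p s - ph s‖) := by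
  have herr := hsol.ae_galerkin_orthogonality hk₁c hk₂c hk₃c hu hp huh hph hsolh
  have hdiv := ae_forall_mem_eq_zero_of_eq_intervalIntegral b Qh hT hC₃ hk₃c hk₃b
    (e := fun t => u t - uh t) (hu.sub huh) (herr.mono fun _ ht => ht.2)
  filter_upwards [herr, hdiv, ae_restrict_mem measurableSet_Icc] with t ⟨hmom, _⟩ hdiv_t ht
  set I := ∫ s in 0..t, (‖u s - uh s‖ + ‖p s - ph s‖)
  have hres : ∀ v ∈ Vh, a (u t - uh t) v + b v (p t - ph t) ≤ (C₁ * ‖a‖ + C₂ * ‖b‖) * I * ‖v‖ :=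
    fun v hv => (hmom v hv).trans_le <| (le_abs_self _).trans <|
      abs_intervalIntegral_kernel_le ht.1 hC₁ hC₂
        (fun s hs => hk₁b t s hs.1.le hs.2 ht.2) (fun s hs => hk₂b t s hs.1.le hs.2 ht.2)
        (IntegrableOn.intervalIntegrable_of_mem_Icc ((hu.sub huh).norm.add (hp.sub hph).norm) ht) v
  have hI : 0 ≤ (C₁ * ‖a‖ + C₂ * ‖b‖) * I := by
    have : 0 ≤ I := intervalIntegral.integral_nonneg ht.1 fun _ _ => by positivity
    positivity
  calc _ ≤ saddlePointConst ‖a‖ ‖b‖ α β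
          * (‖u t - uI t‖ + ‖p t - pI t‖ + (C₁ * ‖a‖ + C₂ * ‖b‖) * I) :=
        norm_sub_add_norm_sub_le_saddlePointConst hα hβ hcoer hinf (hsolh.1 t) (huI t)
          (hsolh.2.1 t) (hpI t) hI hdiv_t hres
    _ = _ := by ring

theorem basic_error_estimate_general
    (T : ℝ) (hT : 0 ≤ T)
    (a : V →L[ℝ] V →L[ℝ] ℝ) (b : V →L[ℝ] Q →L[ℝ] ℝ)
    (k₁ k₂ k₃ : ℝ → ℝ → ℝ)
    (hk₁c : ContinuousOn (fun ts : ℝ × ℝ => k₁ ts.1 ts.2)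
      {ts : ℝ × ℝ | 0 ≤ ts.2 ∧ ts.2 ≤ ts.1 ∧ ts.1 ≤ T})
    (hk₂c : ContinuousOn (fun ts : ℝ × ℝ => k₂ ts.1 ts.2)
      {ts : ℝ × ℝ | 0 ≤ ts.2 ∧ ts.2 ≤ ts.1 ∧ ts.1 ≤ T})
    (hk₃c : ContinuousOn (fun ts : ℝ × ℝ => k₃ ts.1 ts.2)
      {ts : ℝ × ℝ | 0 ≤ ts.2 ∧ ts.2 ≤ ts.1 ∧ ts.1 ≤ T})
    (Ck₁ Ck₂ Ck₃ : ℝ) (hCk₁ : 0 ≤ Ck₁) (hCk₂ : 0 ≤ Ck₂) (hCk₃ : 0 ≤ Ck₃)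
    (hk₁b : ∀ t s : ℝ, 0 ≤ s → s ≤ t → t ≤ T → |k₁ t s| ≤ Ck₁)
    (hk₂b : ∀ t s : ℝ, 0 ≤ s → s ≤ t → t ≤ T → |k₂ t s| ≤ Ck₂)
    (hk₃b : ∀ t s : ℝ, 0 ≤ s → s ≤ t → t ≤ T → |k₃ t s| ≤ Ck₃)
    (αs : ℝ) (hαs : 0 < αs) (βs : ℝ) (hβs : 0 < βs) :
    ∃ C > (0:ℝ),
      ∀ (Vh : Submodule ℝ V) (Qh : Submodule ℝ Q),
        FiniteDimensional ℝ Vh → FiniteDimensional ℝ Qh →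
        (∀ v ∈ Vh, (∀ q ∈ Qh, b v q = 0) → αs * ‖v‖ ^ 2 ≤ a v v) →
        (∀ q ∈ Qh, q ≠ 0 → βs ≤ ⨆ v : Vh, b (v : V) q / (‖(v : V)‖ * ‖q‖)) →
        ∀ (f : ℝ → V →L[ℝ] ℝ) (g : ℝ → Q →L[ℝ] ℝ),
          IntegrableOn f (Icc 0 T) → IntegrableOn g (Icc 0 T) →
          ∀ (u : ℝ → V) (p : ℝ → Q),
            IntegrableOn u (Icc 0 T) → IntegrableOn p (Icc 0 T) →
            MixedVolterraSol T a b k₁ k₂ k₃ f g u p →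
            ∀ (uh : ℝ → V) (ph : ℝ → Q),
              IntegrableOn uh (Icc 0 T) → IntegrableOn ph (Icc 0 T) →
              SemiDiscreteSol T a b k₁ k₂ k₃ f g Vh Qh uh ph →
              ∀ (uI : ℝ → V) (pI : ℝ → Q),
                (∀ t, uI t ∈ Vh) → (∀ t, pI t ∈ Qh) →
                IntegrableOn uI (Icc 0 T) → IntegrableOn pI (Icc 0 T) →
                (∫ t in Icc (0:ℝ) T, ‖u t - uh t‖)
                    + (∫ t in Icc (0:ℝ) T, ‖p t - ph t‖)
                  ≤ C * ((∫ t in Icc (0:ℝ) T, ‖u t - uI t‖)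
                      + ∫ t in Icc (0:ℝ) T, ‖p t - pI t‖) := by
  set c := saddlePointConst ‖a‖ ‖b‖ αs βs
  set CK := Ck₁ * ‖a‖ + Ck₂ * ‖b‖
  have hc : 0 < c := saddlePointConst_pos (norm_nonneg a) (norm_nonneg b) hαs hβs
  have hCK : 0 ≤ CK := by positivity
  refine ⟨exp (c * CK * T) * c, by positivity, ?_⟩
  intro Vh Qh _ _ hcoer hinf f g _ _ u p hu hp hsol uh ph huh hph hsolh uI pI huI hpI hu' hp'
  have heu : IntegrableOn (fun t => ‖u t - uh t‖) (Icc 0 T) := (hu.sub huh).norm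
  have hep : IntegrableOn (fun t => ‖p t - ph t‖) (Icc 0 T) := (hp.sub hph).norm
  have hρ : IntegrableOn (fun t => ‖u t - uI t‖) (Icc 0 T) := (hu.sub hu').norm
  have hψ : IntegrableOn (fun t => ‖p t - pI t‖) (Icc 0 T) := (hp.sub hp').norm
  have hgron := setIntegral_Icc_le_exp_mul_of_ae_le_add_mul_integral
    (h := fun t => ‖u t - uh t‖ + ‖p t - ph t‖) (A := fun t => c * (‖u t - uI t‖ + ‖p t - pI t‖))
    (mul_nonneg hc.le hCK) hT (heu.add hep) ((hρ.add hψ).const_mul c)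
    (fun t => mul_nonneg hc.le (by positivity))
    (hsol.ae_norm_sub_add_norm_sub_le hT hk₁c hk₂c hk₃c hCk₁ hCk₂ hCk₃ hk₁b hk₂b hk₃b hαs hβs
      hcoer hinf hu hp huh hph hsolh huI hpI)
  rwa [integral_add heu hep, integral_const_mul, integral_add hρ hψ, ← mul_assoc] at hgron

theorem basic_error_estimate
    (T : ℝ) (hT : 0 ≤ T)
    (a : V →L[ℝ] V →L[ℝ] ℝ) (b : V →L[ℝ] Q →L[ℝ] ℝ)
    (hsym : ∀ v w : V, a v w = a w v)
    (k₁ k₂ k₃ : ℝ → ℝ → ℝ)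
    (hk₁c : ContinuousOn (fun ts : ℝ × ℝ => k₁ ts.1 ts.2)
      {ts : ℝ × ℝ | 0 ≤ ts.2 ∧ ts.2 ≤ ts.1 ∧ ts.1 ≤ T})
    (hk₂c : ContinuousOn (fun ts : ℝ × ℝ => k₂ ts.1 ts.2)
      {ts : ℝ × ℝ | 0 ≤ ts.2 ∧ ts.2 ≤ ts.1 ∧ ts.1 ≤ T})
    (hk₃c : ContinuousOn (fun ts : ℝ × ℝ => k₃ ts.1 ts.2)
      {ts : ℝ × ℝ | 0 ≤ ts.2 ∧ ts.2 ≤ ts.1 ∧ ts.1 ≤ T})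
    (Ck₁ Ck₂ Ck₃ : ℝ) (hCk₁ : 0 ≤ Ck₁) (hCk₂ : 0 ≤ Ck₂) (hCk₃ : 0 ≤ Ck₃)
    (hk₁b : ∀ t s : ℝ, 0 ≤ s → s ≤ t → t ≤ T → |k₁ t s| ≤ Ck₁)
    (hk₂b : ∀ t s : ℝ, 0 ≤ s → s ≤ t → t ≤ T → |k₂ t s| ≤ Ck₂)
    (hk₃b : ∀ t s : ℝ, 0 ≤ s → s ≤ t → t ≤ T → |k₃ t s| ≤ Ck₃)
    (Ckt : ℝ) (hCkt : 0 ≤ Ckt)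
    (hktb : ∀ t s : ℝ, 0 ≤ s → s ≤ t → t ≤ T → |k₁ t s - k₃ t s| ≤ Ckt)
    (αs : ℝ) (hαs : 0 < αs) (βs : ℝ) (hβs : 0 < βs) :
    ∃ C > (0:ℝ),
      ∀ (Vh : Submodule ℝ V) (Qh : Submodule ℝ Q),
        FiniteDimensional ℝ Vh → FiniteDimensional ℝ Qh →
        (∀ v ∈ Vh, (∀ q ∈ Qh, b v q = 0) → αs * ‖v‖ ^ 2 ≤ a v v) →
        (∀ q ∈ Qh, q ≠ 0 → βs ≤ ⨆ v : Vh, b (v : V) q / (‖(v : V)‖ * ‖q‖)) →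
        ∀ (f : ℝ → V →L[ℝ] ℝ) (g : ℝ → Q →L[ℝ] ℝ),
          IntegrableOn f (Icc 0 T) → IntegrableOn g (Icc 0 T) →
          ∀ (u : ℝ → V) (p : ℝ → Q),
            IntegrableOn u (Icc 0 T) → IntegrableOn p (Icc 0 T) →
            MixedVolterraSol T a b k₁ k₂ k₃ f g u p →
            ∀ (uh : ℝ → V) (ph : ℝ → Q),
              IntegrableOn uh (Icc 0 T) → IntegrableOn ph (Icc 0 T) →
              SemiDiscreteSol T a b k₁ k₂ k₃ f g Vh Qh uh ph →
              ∀ (uI : ℝ → V) (pI : ℝ → Q),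
                (∀ t, uI t ∈ Vh) → (∀ t, pI t ∈ Qh) →
                IntegrableOn uI (Icc 0 T) → IntegrableOn pI (Icc 0 T) →
                (∫ t in Icc (0:ℝ) T, ‖u t - uh t‖)
                    + (∫ t in Icc (0:ℝ) T, ‖p t - ph t‖)
                  ≤ C * ((∫ t in Icc (0:ℝ) T, ‖u t - uI t‖)
                      + ∫ t in Icc (0:ℝ) T, ‖p t - pI t‖) :=
  basic_error_estimate_general T hT a b k₁ k₂ k₃ hk₁c hk₂c hk₃c Ck₁ Ck₂ Ck₃ hCk₁ hCk₂ hCk₃ hk₁b hk₂b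
    hk₃b αs hαs βs hβs
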